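/- Let M = ℝ² ∖ ((−∞, 0] × {0}) be the slit plane, with r(p) = ‖p‖ and θ(p) ∈ (−π, π) the argument of p. Let ω > 0, λ ∈ ℂ, and let h : ℝ → ℂ be smooth on (0, ∞) and satisfy the Bessel-type equation h''(ρ) + h'(ρ)/ρ + (λ²/ρ² + ω²) · h(ρ) = 0 for all ρ > 0. Then the function u : M → ℂ defined by u(p) = e^{λ θ(p)} · h(r(p)) satisfies the Helmholtz equation (Δ u)(p) + ω² · u(p) = 0 for all p ∈ M. -/

import Mathlib

/-- Partial derivative in the direction of the first standard basis vector of ℝ². -/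
noncomputable def pdx (f : ℝ × ℝ → ℂ) : ℝ × ℝ → ℂ :=
  fun p => fderiv ℝ f p (1, 0)

/-- Partial derivative in the direction of the second standard basis vector of ℝ². -/
noncomputable def pdy (f : ℝ × ℝ → ℂ) : ℝ × ℝ → ℂ :=
  fun p => fderiv ℝ f p (0, 1)

/-- The Laplacian `Δf = ∂ₓ²f + ∂ᵧ²f` on ℝ². -/
noncomputable def lap (f : ℝ × ℝ → ℂ) : ℝ × ℝ → ℂ :=
  fun p => pdx (pdx f) p + pdy (pdy f) p

/-- The slit plane `M = ℝ² ∖ ((−∞,0] × {0})`. -/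
def slitPlane : Set (ℝ × ℝ) := {p : ℝ × ℝ | ¬ (p.1 ≤ 0 ∧ p.2 = 0)}

/-- The Euclidean norm of a point of ℝ². -/
noncomputable def rad (p : ℝ × ℝ) : ℝ := Real.sqrt (p.1 ^ 2 + p.2 ^ 2)

noncomputable def zline : (ℝ × ℝ) →L[ℝ] ℂ :=
  Complex.ofRealCLM.comp (ContinuousLinearMap.fst ℝ ℝ ℝ) +
    Complex.I • Complex.ofRealCLM.comp (ContinuousLinearMap.snd ℝ ℝ ℝ)

lemma zline_apply (v : ℝ × ℝ) : zline v = (v.1 : ℂ) + v.2 * Complex.I := by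
  simp [zline, mul_comm]

lemma zline_e1 : zline ((1 : ℝ), (0 : ℝ)) = 1 := by simp [zline_apply]

lemma zline_e2 : zline ((0 : ℝ), (1 : ℝ)) = Complex.I := by simp [zline_apply]

noncomputable def Tf (q : ℝ × ℝ) : ℝ := (Complex.log (zline q)).im
noncomputable def Rf (q : ℝ × ℝ) : ℝ := Real.exp ((Complex.log (zline q)).re)

variable {p : ℝ × ℝ}

lemma slit_iff : p ∈ slitPlane ↔ (0 < p.1 ∨ p.2 ≠ 0) := by
  constructor
  · intro h
    by_contra hc
    push_neg at hc
    exact h ⟨hc.1, hc.2⟩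
  · rintro (h | h) hc
    · exact absurd hc.1 (not_le.2 h)
    · exact h hc.2

lemma sq_pos (hp : p ∈ slitPlane) : 0 < p.1 ^ 2 + p.2 ^ 2 := by
  rcases slit_iff.1 hp with h | h <;> positivity

lemma rad_pos (hp : p ∈ slitPlane) : 0 < rad p := Real.sqrt_pos.2 (sq_pos hp)

lemma normSq_zline : Complex.normSq (zline p) = rad p ^ 2 := by
  rw [zline_apply, Complex.normSq_add_mul_I, rad, Real.sq_sqrt (by positivity)]

lemma abs_zline (hp : p ∈ slitPlane) : ‖zline p‖ = rad p := by
  rw [Complex.norm_def, normSq_zline, Real.sqrt_sq (rad_pos hp).le]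

lemma zline_mem (hp : p ∈ slitPlane) : zline p ∈ Complex.slitPlane := by
  rcases slit_iff.1 hp with h | h
  · exact Or.inl (by simpa [zline_apply] using h)
  · exact Or.inr (by simpa [zline_apply] using h)

lemma zline_ne (hp : p ∈ slitPlane) : zline p ≠ 0 :=
  Complex.slitPlane_ne_zero (zline_mem hp)

lemma Rf_eq (hp : p ∈ slitPlane) : Rf p = rad p := by
  rw [Rf, Complex.log_re, Real.exp_log (by rw [abs_zline hp]; exact rad_pos hp), abs_zline hp]

lemma Tf_eq (hp : p ∈ slitPlane) {θ : ℝ} (hθ : θ ∈ Set.Ioo (-Real.pi) Real.pi)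
    (hx : p.1 = rad p * Real.cos θ) (hy : p.2 = rad p * Real.sin θ) : Tf p = θ := by
  have hz : zline p = (rad p : ℂ) * (Complex.cos θ + Complex.sin θ * Complex.I) := by
    rw [zline_apply, hx, hy]
    push_cast [Complex.ofReal_cos, Complex.ofReal_sin]
    ring
  rw [Tf, Complex.log_im, hz,
    Complex.arg_mul_cos_add_sin_mul_I (rad_pos hp) ⟨hθ.1, hθ.2.le⟩]

/- derivative lemmas -/
lemma hasF_log (hp : p ∈ slitPlane) :
    HasFDerivAt (fun q => Complex.log (zline q)) ((zline p)⁻¹ • zline) p := by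
  exact
    (Complex.hasDerivAt_log (zline_mem hp)).comp_hasFDerivAt p zline.hasFDerivAt

lemma hasF_T (hp : p ∈ slitPlane) :
    HasFDerivAt Tf (Complex.imCLM.comp ((zline p)⁻¹ • zline)) p :=
  (Complex.imCLM.hasFDerivAt.comp p (hasF_log hp))

lemma hasF_R (hp : p ∈ slitPlane) :
    HasFDerivAt Rf (rad p • (Complex.reCLM.comp ((zline p)⁻¹ • zline))) p := by
  have h1 : HasFDerivAt (fun q => (Complex.log (zline q)).re)
      (Complex.reCLM.comp ((zline p)⁻¹ • zline)) p :=
    Complex.reCLM.hasFDerivAt.comp p (hasF_log hp)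
  have h2 := (Real.hasDerivAt_exp ((Complex.log (zline p)).re)).comp_hasFDerivAt p h1
  rw [← Rf_eq hp]; exact h2

lemma hasF_inv (hp : p ∈ slitPlane) :
    HasFDerivAt (fun q => (zline q)⁻¹) ((-((zline p) ^ 2)⁻¹) • zline) p := by
  exact (hasDerivAt_inv (zline_ne hp)).comp_hasFDerivAt p zline.hasFDerivAt

variable {h : ℝ → ℂ} {lam : ℂ}

lemma hd1 (hh : ContDiffOn ℝ (⊤ : ℕ∞) h (Set.Ioi 0)) (hp : p ∈ slitPlane) :
    HasDerivAt h (deriv h (Rf p)) (Rf p) := by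
  have hr : Rf p ∈ Set.Ioi (0:ℝ) := by rw [Rf_eq hp]; exact rad_pos hp
  exact ((hh.contDiffAt (isOpen_Ioi.mem_nhds hr)).differentiableAt (by simp)).hasDerivAt

lemma hd2 (hh : ContDiffOn ℝ (⊤ : ℕ∞) h (Set.Ioi 0)) (hp : p ∈ slitPlane) :
    HasDerivAt (deriv h) (deriv (deriv h) (Rf p)) (Rf p) := by
  have hr : Rf p ∈ Set.Ioi (0:ℝ) := by rw [Rf_eq hp]; exact rad_pos hp
  have h2 : ContDiffOn ℝ (⊤ : ℕ∞) (deriv h) (Set.Ioi 0) :=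
    hh.deriv_of_isOpen isOpen_Ioi (by simp)
  exact ((h2.contDiffAt (isOpen_Ioi.mem_nhds hr)).differentiableAt (by simp)).hasDerivAt

lemma hasF_Tc (hp : p ∈ slitPlane) :
    HasFDerivAt (fun q => ((Tf q : ℂ)))
      (Complex.ofRealCLM.comp (Complex.imCLM.comp ((zline p)⁻¹ • zline))) p :=
  Complex.ofRealCLM.hasFDerivAt.comp p (hasF_T hp)

lemma hasF_E (hp : p ∈ slitPlane) :
    HasFDerivAt (fun q => Complex.exp (lam * Tf q))
      (Complex.exp (lam * Tf p) •
        (lam • (Complex.ofRealCLM.comp (Complex.imCLM.comp ((zline p)⁻¹ • zline))))) p :=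
  ((hasF_Tc hp).const_mul lam).cexp

lemma fderiv_U (hh : ContDiffOn ℝ (⊤ : ℕ∞) h (Set.Ioi 0)) (hp : p ∈ slitPlane) (v : ℝ × ℝ) :
    fderiv ℝ (fun q => Complex.exp (lam * Tf q) * h (Rf q)) p v
      = Complex.exp (lam * Tf p) *
        (lam * (((zline p)⁻¹ * zline v).im : ℂ) * h (Rf p)
          + deriv h (Rf p) * ((Rf p : ℂ) * (((zline p)⁻¹ * zline v).re : ℂ))) := by
  have hH := ((hd1 hh hp).hasFDerivAt).comp p (hasF_R hp)
  have hU' : HasFDerivAt (fun q => Complex.exp (lam * Tf q) * h (Rf q)) _ p :=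
    (hasF_E (lam := lam) hp).mul hH
  rw [hU'.fderiv]
  simp [Complex.real_smul, Rf_eq hp]
  ring

noncomputable def gf (lam : ℂ) (h : ℝ → ℂ) (w : ℂ) (q : ℝ × ℝ) : ℂ :=
  Complex.exp (lam * Tf q) *
    (lam * (((zline q)⁻¹ * w).im : ℂ) * h (Rf q)
      + deriv h (Rf q) * ((Rf q * ((zline q)⁻¹ * w).re : ℝ) : ℂ))

lemma fderiv_g (hh : ContDiffOn ℝ (⊤ : ℕ∞) h (Set.Ioi 0)) (hp : p ∈ slitPlane) (w : ℂ) (v : ℝ × ℝ) :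
    fderiv ℝ (gf lam h w) p v
      = Complex.exp (lam * Tf p) *
        ( lam * (((zline p)⁻¹ * zline v).im : ℂ) *
            (lam * (((zline p)⁻¹ * w).im : ℂ) * h (Rf p)
              + deriv h (Rf p) * ((Rf p : ℂ) * (((zline p)⁻¹ * w).re : ℂ)))
          + (lam * (((-((zline p) ^ 2)⁻¹ * zline v) * w).im : ℂ) * h (Rf p)
              + lam * (((zline p)⁻¹ * w).im : ℂ) *
                  (deriv h (Rf p) * ((Rf p : ℂ) * (((zline p)⁻¹ * zline v).re : ℂ)))
              + deriv (deriv h) (Rf p) * ((Rf p : ℂ) * (((zline p)⁻¹ * zline v).re : ℂ))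
                  * ((Rf p : ℂ) * (((zline p)⁻¹ * w).re : ℂ))
              + deriv h (Rf p) *
                  (((Rf p : ℂ) * (((zline p)⁻¹ * zline v).re : ℂ)) * (((zline p)⁻¹ * w).re : ℂ)
                    + (Rf p : ℂ) * (((-((zline p) ^ 2)⁻¹ * zline v) * w).re : ℂ)))) := by
  -- building blocks
  have hinv := hasF_inv hp
  have hmul := hinv.mul_const w
  have hm := Complex.ofRealCLM.hasFDerivAt.comp p (Complex.imCLM.hasFDerivAt.comp p hmul)
  have he := Complex.reCLM.hasFDerivAt.comp p hmul
  have hre := (hasF_R hp).mul he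
  have hreC := Complex.ofRealCLM.hasFDerivAt.comp p hre
  have hH := ((hd1 hh hp).hasFDerivAt).comp p (hasF_R hp)
  have hH1 := ((hd2 hh hp).hasFDerivAt).comp p (hasF_R hp)
  have ht1 := (hm.const_mul lam).mul hH
  have ht2 := hH1.mul hreC
  have hG : HasFDerivAt (𝕜 := ℝ) (gf lam h w) _ p :=
    (hasF_E (lam := lam) hp).mul (ht1.add ht2)
  rw [hG.fderiv]
  simp [Complex.real_smul, Rf_eq hp]
  ring

lemma isOpen_slit : IsOpen slitPlane := by
  have : slitPlane = {q : ℝ × ℝ | 0 < q.1} ∪ {q : ℝ × ℝ | q.2 ≠ 0} :=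
    Set.ext fun q => slit_iff
  rw [this]
  exact (isOpen_lt continuous_const continuous_fst).union
    (isOpen_ne_fun continuous_snd continuous_const)


set_option maxHeartbeats 2000000 in
/-- If `h` solves the Bessel-type equation `h'' + h'/ρ + (λ²/ρ² + ω²)h = 0`
on `(0,∞)`, then `u(p) = e^{λθ(p)} h(r(p))` solves the Helmholtz equation
`Δu + ω²u = 0` on the slit plane. -/
theorem helmholtz_separated (theta : ℝ × ℝ → ℝ)
    (htheta : ∀ p ∈ slitPlane,
      theta p ∈ Set.Ioo (-Real.pi) Real.pi ∧
      p.1 = rad p * Real.cos (theta p) ∧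
      p.2 = rad p * Real.sin (theta p))
    (ω : ℝ) (hω : 0 < ω) (lam : ℂ)
    (h : ℝ → ℂ) (hh : ContDiffOn ℝ (⊤ : ℕ∞) h (Set.Ioi 0))
    (hBessel : ∀ ρ > (0 : ℝ),
      deriv (deriv h) ρ + deriv h ρ / (ρ : ℂ)
        + (lam ^ 2 / (ρ : ℂ) ^ 2 + (ω : ℂ) ^ 2) * h ρ = 0) :
    ∀ p ∈ slitPlane,
      lap (fun q : ℝ × ℝ => Complex.exp (lam * theta q) * h (rad q)) p
        + (ω : ℂ) ^ 2 * (Complex.exp (lam * theta p) * h (rad p)) = 0 := by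
  intro p hp
  have hueq : ∀ q ∈ slitPlane,
      Complex.exp (lam * theta q) * h (rad q) = Complex.exp (lam * Tf q) * h (Rf q) := by
    intro q hq
    obtain ⟨h1, h2, h3⟩ := htheta q hq
    rw [Tf_eq hq h1 h2 h3, Rf_eq hq]
  have hUx : ∀ q ∈ slitPlane,
      pdx (fun q : ℝ × ℝ => Complex.exp (lam * theta q) * h (rad q)) q = gf lam h 1 q := by
    intro q hq
    have hev : (fun q : ℝ × ℝ => Complex.exp (lam * theta q) * h (rad q)) =ᶠ[nhds q]
        (fun q' => Complex.exp (lam * Tf q') * h (Rf q')) :=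
      Filter.eventuallyEq_of_mem (isOpen_slit.mem_nhds hq) hueq
    rw [pdx, hev.fderiv_eq, fderiv_U hh hq]
    simp [gf, zline_apply]
  have hUy : ∀ q ∈ slitPlane,
      pdy (fun q : ℝ × ℝ => Complex.exp (lam * theta q) * h (rad q)) q
        = gf lam h Complex.I q := by
    intro q hq
    have hev : (fun q : ℝ × ℝ => Complex.exp (lam * theta q) * h (rad q)) =ᶠ[nhds q]
        (fun q' => Complex.exp (lam * Tf q') * h (Rf q')) :=
      Filter.eventuallyEq_of_mem (isOpen_slit.mem_nhds hq) hueq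
    rw [pdy, hev.fderiv_eq, fderiv_U hh hq]
    simp [gf, zline_apply]
  have hx2 : pdx (pdx (fun q : ℝ × ℝ => Complex.exp (lam * theta q) * h (rad q))) p
      = fderiv ℝ (gf lam h 1) p (1, 0) := by
    have hev : pdx (fun q : ℝ × ℝ => Complex.exp (lam * theta q) * h (rad q)) =ᶠ[nhds p]
        gf lam h 1 := Filter.eventuallyEq_of_mem (isOpen_slit.mem_nhds hp) hUx
    rw [pdx, hev.fderiv_eq]
  have hy2 : pdy (pdy (fun q : ℝ × ℝ => Complex.exp (lam * theta q) * h (rad q))) p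
      = fderiv ℝ (gf lam h Complex.I) p (0, 1) := by
    have hev : pdy (fun q : ℝ × ℝ => Complex.exp (lam * theta q) * h (rad q)) =ᶠ[nhds p]
        gf lam h Complex.I := Filter.eventuallyEq_of_mem (isOpen_slit.mem_nhds hp) hUy
    rw [pdy, hev.fderiv_eq]
  show pdx (pdx _) p + pdy (pdy _) p + _ = 0
  rw [hx2, hy2, fderiv_g hh hp 1 (1, 0), fderiv_g hh hp Complex.I (0, 1), hueq p hp]
  -- now pure scalar computation
  have hrpos := rad_pos hp
  have hrne : ((rad p : ℝ) : ℂ) ≠ 0 := Complex.ofReal_ne_zero.2 (ne_of_gt hrpos)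
  have hB := hBessel (rad p) hrpos
  field_simp at hB
  have hBp : deriv (deriv h) (rad p) * ((rad p : ℝ) : ℂ) ^ 2 + deriv h (rad p) * ((rad p : ℝ) : ℂ)
      + lam ^ 2 * h (rad p) + (ω : ℂ) ^ 2 * ((rad p : ℝ) : ℂ) ^ 2 * h (rad p) = 0 := by
    apply mul_left_cancel₀ hrne
    rw [mul_zero]
    linear_combination ((rad p : ℝ) : ℂ) * hB
  have hSr : (((zline p)⁻¹.re ^ 2 + (zline p)⁻¹.im ^ 2) * rad p ^ 2 : ℝ) = 1 := by
    have h1 : (zline p)⁻¹.re ^ 2 + (zline p)⁻¹.im ^ 2 = Complex.normSq ((zline p)⁻¹) := by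
      rw [Complex.normSq_apply]; ring
    rw [h1, map_inv₀, normSq_zline]
    field_simp
  have hS : ((((zline p)⁻¹.re : ℝ) : ℂ) ^ 2 + (((zline p)⁻¹.im : ℝ) : ℂ) ^ 2)
      * ((rad p : ℝ) : ℂ) ^ 2 = 1 := by exact_mod_cast hSr
  simp only [Rf_eq hp, zline_e1, zline_e2, mul_one, one_mul, neg_mul, neg_neg,
    Complex.mul_I_im, Complex.mul_I_re, Complex.neg_im, Complex.neg_re]
  push_cast
  linear_combination
    Complex.exp (lam * (Tf p : ℂ)) *
        ((((zline p)⁻¹.re : ℝ) : ℂ) ^ 2 + (((zline p)⁻¹.im : ℝ) : ℂ) ^ 2) * hBp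
      - Complex.exp (lam * (Tf p : ℂ)) * (ω : ℂ) ^ 2 * h (rad p) * hS
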